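/- Let f : ℝⁿ → ℝ be a C² function with min f = 0 satisfying ‖∇f(x)‖² ≥ f(x) for all x ∈ ℝⁿ, assume K = argmin(f) is compact, and suppose the Hessian H = ∇²f has rank m at every point of K. Then for every x ∈ K and every z ∈ K sufficiently close to x (say with ‖∇²f(z) − ∇²f(x)‖_op ≤ 1/4), the subspaces Ker(H(z))^⊥ and Ker(H(x)) are complementary: Ker(H(z))^⊥ ⊕ Ker(H(x)) = ℝⁿ, equivalently Ker(H(z))^⊥ ∩ Ker(H(x)) = {0}. -/

import Mathlib

/-!
At a zero `z` of `f`, Taylor expansion along the line `z + t • u` gives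
`f (z + t • u) = t² ⟪H u, u⟫ / 2 + o(t²)` and `∇f (z + t • u) = t • H u + o(t)`, where `H = ∇²f(z)`.
So `f ≥ 0` makes `H` positive semidefinite and the PL inequality gives `⟪H u, u⟫ / 2 ≤ ‖H u‖²`,
which forces every nonzero eigenvalue of `H` to be at least `1/2`. Hence `‖u‖ ≤ 2 ‖H u‖` on
`(ker H)ᗮ`; a vector of `ker ∇²f(x)` lying there satisfies `‖H u‖ = ‖(H - ∇²f(x)) u‖ ≤ ‖u‖ / 4`,
so it vanishes. Equal ranks make the dimensions of the two subspaces add up to `n`.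
-/

open RealInnerProductSpace InnerProductSpace Filter Topology

section Spectral

variable {E : Type*} [NormedAddCommGroup E] [InnerProductSpace ℝ E]

theorem Module.End.HasEigenvalue.le_of_inner_le_norm_sq {T : E →ₗ[ℝ] E} {a μ : ℝ}
    (hpsd : ∀ u, 0 ≤ ⟪T u, u⟫) (hT : ∀ u, a * ⟪T u, u⟫ ≤ ‖T u‖ ^ 2)
    (hμ : Module.End.HasEigenvalue T μ) (hμ0 : μ ≠ 0) : a ≤ μ := by
  obtain ⟨v, hv⟩ := hμ.exists_hasEigenvector
  have hTv : T v = μ • v := Module.End.mem_eigenspace_iff.mp hv.1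
  have hv0 : 0 < ‖v‖ ^ 2 := by have := norm_pos_iff.mpr hv.2; positivity
  have hinner : ⟪T v, v⟫ = μ * ‖v‖ ^ 2 := by
    rw [hTv, real_inner_smul_left, real_inner_self_eq_norm_sq]
  have hnorm : ‖T v‖ ^ 2 = μ ^ 2 * ‖v‖ ^ 2 := by
    rw [hTv, norm_smul, mul_pow, Real.norm_eq_abs, sq_abs]
  have hμpos : 0 < μ := by
    have := hpsd v
    rw [hinner] at this
    exact lt_of_le_of_ne (nonneg_of_mul_nonneg_left this hv0) hμ0.symm
  have := hT v
  rw [hinner, hnorm, ← mul_assoc, sq μ] at this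
  exact le_of_mul_le_mul_right (le_of_mul_le_mul_right this hv0) hμpos

theorem LinearMap.IsSymmetric.mul_norm_le_norm_apply_of_mem_orthogonal_ker
    [FiniteDimensional ℝ E] {T : E →ₗ[ℝ] E} (hT : T.IsSymmetric) {c : ℝ} (hc : 0 ≤ c)
    (hμ : ∀ μ, Module.End.HasEigenvalue T μ → μ ≠ 0 → c ≤ |μ|)
    {u : E} (hu : u ∈ (LinearMap.ker T)ᗮ) : c * ‖u‖ ≤ ‖T u‖ := by
  let b := hT.eigenvectorBasis rfl
  let μ := hT.eigenvalues rfl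
  have hcoord : ∀ i, c ^ 2 * ⟪b i, u⟫ ^ 2 ≤ ⟪b i, T u⟫ ^ 2 := by
    intro i
    have hTb : T (b i) = μ i • b i := hT.apply_eigenvectorBasis rfl i
    rw [← hT, hTb, real_inner_smul_left, mul_pow]
    by_cases hμi : μ i = 0
    · have : ⟪b i, u⟫ = 0 := hu (b i) (by simp [hTb, hμi])
      simp [this]
    · have : c ≤ |μ i| := hμ _ (hT.hasEigenvalue_eigenvalues rfl i) hμi
      gcongr ?_ * _
      calc c ^ 2 ≤ |μ i| ^ 2 := by gcongr
        _ = μ i ^ 2 := sq_abs _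
  have hsq : (c * ‖u‖) ^ 2 ≤ ‖T u‖ ^ 2 := by
    rw [mul_pow, ← b.sum_sq_inner_right, ← b.sum_sq_inner_right, Finset.mul_sum]
    exact Finset.sum_le_sum fun i _ ↦ hcoord i
  exact le_of_sq_le_sq hsq (norm_nonneg _)

end Spectral

section Taylor

variable {E : Type*} [NormedAddCommGroup E] [NormedSpace ℝ E] {f : E → ℝ} {x : E}

theorem ContDiff.tendsto_sub_div_sq_of_fderiv_eq_zero (hf : ContDiff ℝ 2 f)
    (hcrit : fderiv ℝ f x = 0) (u : E) :
    Tendsto (fun t : ℝ ↦ (f (x + t • u) - f x) / t ^ 2) (𝓝[>] 0)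
      (𝓝 (fderiv ℝ (fderiv ℝ f) x u u / 2)) := by
  have hdiff : Differentiable ℝ (fderiv ℝ f) :=
    (hf.fderiv_right (m := 1) (by norm_num)).differentiable one_ne_zero
  have htaylor := convex_univ.taylor_approx_two_segment (f' := fderiv ℝ f)
    (f'' := fderiv ℝ (fderiv ℝ f) x)
    (fun y _ ↦ (hf.differentiable two_ne_zero y).hasFDerivAt) (Set.mem_univ x)
    (by simpa only [interior_univ] using (hdiff x).hasFDerivAt.hasFDerivWithinAt)
    (v := 0) (w := u) (by simp) (by simp)
  have hrem := htaylor.tendsto_div_nhds_zero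
  simp only [smul_zero, add_zero, hcrit, map_zero, zero_apply, smul_eq_mul,
    sub_zero, mul_zero] at hrem
  have := hrem.const_add (fderiv ℝ (fderiv ℝ f) x u u / 2)
  rw [add_zero] at this
  refine this.congr' (eventually_mem_nhdsWithin.mono fun t (ht : 0 < t) ↦ ?_)
  field_simp
  ring

theorem IsLocalMin.fderiv_fderiv_apply_self_nonneg (hf : ContDiff ℝ 2 f) (hmin : IsLocalMin f x)
    (u : E) : 0 ≤ fderiv ℝ (fderiv ℝ f) x u u := by
  have hline : Tendsto (fun t : ℝ ↦ x + t • u) (𝓝[>] 0) (𝓝 x) :=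
    ((continuous_const.add (continuous_id.smul continuous_const)).tendsto' 0 x
      (by simp)).mono_left nhdsWithin_le_nhds
  have hquot : ∀ᶠ t in 𝓝[>] (0 : ℝ), 0 ≤ (f (x + t • u) - f x) / t ^ 2 :=
    (hline.eventually hmin).mono fun t ht ↦ div_nonneg (sub_nonneg.mpr ht) (sq_nonneg t)
  have := ge_of_tendsto (hf.tendsto_sub_div_sq_of_fderiv_eq_zero hmin.fderiv_eq_zero u) hquot
  linarith

end Taylor

section Gradient

variable {E : Type*} [NormedAddCommGroup E] [InnerProductSpace ℝ E] [CompleteSpace E]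
  {f : E → ℝ} {x : E}

theorem inner_fderiv_gradient_apply (x u v : E) :
    ⟪fderiv ℝ (gradient f) x u, v⟫ = fderiv ℝ (fderiv ℝ f) x u v := by
  have : gradient f = (toDual ℝ E).symm ∘ fderiv ℝ f := rfl
  rw [this, LinearIsometryEquiv.comp_fderiv]
  exact toDual_symm_apply

theorem ContDiffAt.isSymmetric_fderiv_gradient (hf : ContDiffAt ℝ 2 f x) :
    (fderiv ℝ (gradient f) x : E →ₗ[ℝ] E).IsSymmetric := fun u v ↦ by
  rw [ContinuousLinearMap.coe_coe, real_inner_comm _ u, inner_fderiv_gradient_apply,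
    inner_fderiv_gradient_apply, hf.isSymmSndFDerivAt (by simp)]

theorem ContDiff.half_inner_fderiv_gradient_self_le_norm_sq (hf : ContDiff ℝ 2 f)
    (hPL : ∀ y, f y ≤ ‖gradient f y‖ ^ 2) (hx : f x = 0) (hcrit : fderiv ℝ f x = 0) (u : E) :
    1 / 2 * ⟪fderiv ℝ (gradient f) x u, u⟫ ≤ ‖fderiv ℝ (gradient f) x u‖ ^ 2 := by
  have hgrad : gradient f x = 0 := by simp [gradient, hcrit]
  have hdiff : DifferentiableAt ℝ (gradient f) x :=
    (((toDual ℝ E).symm.contDiff.comp (hf.fderiv_right (m := 1) (by norm_num))).differentiable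
      one_ne_zero) x
  have hline : HasDerivAt (fun t : ℝ ↦ x + t • u) u 0 := by
    simpa using ((hasDerivAt_id (0 : ℝ)).smul_const u).const_add x
  have hslope :=
    (hdiff.hasFDerivAt.comp_hasDerivAt_of_eq 0 hline (by simp)).tendsto_slope_zero_right
  simp only [zero_add, zero_smul, add_zero, Function.comp_apply, hgrad, sub_zero] at hslope
  have hbound : ∀ᶠ t in 𝓝[>] (0 : ℝ),
      (f (x + t • u) - f x) / t ^ 2 ≤ ‖t⁻¹ • gradient f (x + t • u)‖ ^ 2 := by
    filter_upwards [self_mem_nhdsWithin] with t (ht : 0 < t)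
    rw [hx, sub_zero, norm_smul, mul_pow, norm_inv, Real.norm_of_nonneg ht.le, inv_pow,
      div_eq_inv_mul]
    exact mul_le_mul_of_nonneg_left (hPL _) (by positivity)
  have := le_of_tendsto_of_tendsto (hf.tendsto_sub_div_sq_of_fderiv_eq_zero hcrit u)
    ((hslope.norm).pow 2) hbound
  rw [← inner_fderiv_gradient_apply] at this
  linarith

end Gradient

section Complement

variable {E : Type*} [NormedAddCommGroup E] [InnerProductSpace ℝ E] {A B : E →L[ℝ] E} {c : ℝ}

theorem ContinuousLinearMap.disjoint_orthogonal_ker_ker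
    (hA : ∀ u ∈ (LinearMap.ker (A : E →ₗ[ℝ] E))ᗮ, c * ‖u‖ ≤ ‖A u‖) (hAB : ‖A - B‖ < c) :
    Disjoint (LinearMap.ker (A : E →ₗ[ℝ] E))ᗮ (LinearMap.ker (B : E →ₗ[ℝ] E)) := by
  refine Submodule.disjoint_def.mpr fun u huA (huB : B u = 0) ↦ ?_
  by_contra hu
  have hu_pos : 0 < ‖u‖ := norm_pos_iff.mpr hu
  exact lt_irrefl _ <| calc
    c * ‖u‖ ≤ ‖A u‖ := hA u huA
    _ = ‖(A - B) u‖ := by rw [sub_apply, huB, sub_zero]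
    _ ≤ ‖A - B‖ * ‖u‖ := (A - B).le_opNorm u
    _ < c * ‖u‖ := by gcongr

theorem ContinuousLinearMap.isCompl_orthogonal_ker_ker [FiniteDimensional ℝ E]
    (hA : ∀ u ∈ (LinearMap.ker (A : E →ₗ[ℝ] E))ᗮ, c * ‖u‖ ≤ ‖A u‖) (hAB : ‖A - B‖ < c)
    (hrank : Module.finrank ℝ (LinearMap.range (A : E →ₗ[ℝ] E)) =
      Module.finrank ℝ (LinearMap.range (B : E →ₗ[ℝ] E))) :
    IsCompl (LinearMap.ker (A : E →ₗ[ℝ] E))ᗮ (LinearMap.ker (B : E →ₗ[ℝ] E)) := by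
  refine (Submodule.isCompl_iff_disjoint _ _ ?_).mpr (disjoint_orthogonal_ker_ker hA hAB)
  have := (LinearMap.ker (A : E →ₗ[ℝ] E)).finrank_add_finrank_orthogonal
  have := LinearMap.finrank_range_add_finrank_ker (A : E →ₗ[ℝ] E)
  have := LinearMap.finrank_range_add_finrank_ker (B : E →ₗ[ℝ] E)
  omega

end Complement

theorem pl_hessian_kernels_complementary_general (n : ℕ) (f : EuclideanSpace ℝ (Fin n) → ℝ)
    (hf : ContDiff ℝ 2 f) (hpos : ∀ x, 0 ≤ f x)
    (hPL : ∀ x, ‖gradient f x‖ ^ 2 ≥ f x) (m : ℕ)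
    (hrank : ∀ z ∈ {x | f x = 0},
      Module.finrank ℝ (LinearMap.range (fderiv ℝ (gradient f) z :
        EuclideanSpace ℝ (Fin n) →ₗ[ℝ] EuclideanSpace ℝ (Fin n))) = m) :
    ∀ x ∈ {x | f x = 0}, ∀ z ∈ {x | f x = 0},
      ‖fderiv ℝ (gradient f) z - fderiv ℝ (gradient f) x‖ ≤ 1 / 4 →
      (LinearMap.ker (fderiv ℝ (gradient f) z :
          EuclideanSpace ℝ (Fin n) →ₗ[ℝ] EuclideanSpace ℝ (Fin n)))ᗮ ⊓
        LinearMap.ker (fderiv ℝ (gradient f) x :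
          EuclideanSpace ℝ (Fin n) →ₗ[ℝ] EuclideanSpace ℝ (Fin n)) = ⊥ ∧
      (LinearMap.ker (fderiv ℝ (gradient f) z :
          EuclideanSpace ℝ (Fin n) →ₗ[ℝ] EuclideanSpace ℝ (Fin n)))ᗮ ⊔
        LinearMap.ker (fderiv ℝ (gradient f) x :
          EuclideanSpace ℝ (Fin n) →ₗ[ℝ] EuclideanSpace ℝ (Fin n)) = ⊤ := by
  intro x hx z (hz : f z = 0) hclose
  have hmin : IsLocalMin f z := Eventually.of_forall fun y ↦ hz ▸ hpos y
  have hpsd (v : EuclideanSpace ℝ (Fin n)) : 0 ≤ ⟪fderiv ℝ (gradient f) z v, v⟫ := by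
    rw [inner_fderiv_gradient_apply]
    exact hmin.fderiv_fderiv_apply_self_nonneg hf v
  have hcoercive : ∀ u ∈ (LinearMap.ker (fderiv ℝ (gradient f) z :
      EuclideanSpace ℝ (Fin n) →ₗ[ℝ] EuclideanSpace ℝ (Fin n)))ᗮ,
      1 / 2 * ‖u‖ ≤ ‖fderiv ℝ (gradient f) z u‖ := fun u hu ↦
    hf.contDiffAt.isSymmetric_fderiv_gradient.mul_norm_le_norm_apply_of_mem_orthogonal_ker
      (by norm_num) (fun μ hμ hμ0 ↦ (hμ.le_of_inner_le_norm_sq hpsd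
        (hf.half_inner_fderiv_gradient_self_le_norm_sq hPL hz
          hmin.fderiv_eq_zero) hμ0).trans (le_abs_self μ)) hu
  have hcompl := ContinuousLinearMap.isCompl_orthogonal_ker_ker hcoercive
    (hclose.trans_lt (by norm_num)) ((hrank z hz).trans (hrank x hx).symm)
  exact ⟨hcompl.inf_eq_bot, hcompl.sup_eq_top⟩

/-- For a `C²` function with `min f = 0` satisfying `‖∇f‖² ≥ f`,
compact argmin `K`, and Hessian of constant rank `m` on `K`: for `x, z ∈ K` with
`‖∇²f(z) − ∇²f(x)‖_op ≤ 1/4`, the subspaces `Ker(H(z))ᗮ` and `Ker(H(x))` are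
complementary. -/
theorem pl_hessian_kernels_complementary (n : ℕ) (f : EuclideanSpace ℝ (Fin n) → ℝ)
    (hf : ContDiff ℝ 2 f) (hpos : ∀ x, 0 ≤ f x) (hmin : ∃ x, f x = 0)
    (hPL : ∀ x, ‖gradient f x‖ ^ 2 ≥ f x)
    (hcpt : IsCompact {x | f x = 0}) (m : ℕ)
    (hrank : ∀ z ∈ {x | f x = 0},
      Module.finrank ℝ (LinearMap.range (fderiv ℝ (gradient f) z :
        EuclideanSpace ℝ (Fin n) →ₗ[ℝ] EuclideanSpace ℝ (Fin n))) = m) :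
    ∀ x ∈ {x | f x = 0}, ∀ z ∈ {x | f x = 0},
      ‖fderiv ℝ (gradient f) z - fderiv ℝ (gradient f) x‖ ≤ 1 / 4 →
      (LinearMap.ker (fderiv ℝ (gradient f) z :
          EuclideanSpace ℝ (Fin n) →ₗ[ℝ] EuclideanSpace ℝ (Fin n)))ᗮ ⊓
        LinearMap.ker (fderiv ℝ (gradient f) x :
          EuclideanSpace ℝ (Fin n) →ₗ[ℝ] EuclideanSpace ℝ (Fin n)) = ⊥ ∧
      (LinearMap.ker (fderiv ℝ (gradient f) z :
          EuclideanSpace ℝ (Fin n) →ₗ[ℝ] EuclideanSpace ℝ (Fin n)))ᗮ ⊔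
        LinearMap.ker (fderiv ℝ (gradient f) x :
          EuclideanSpace ℝ (Fin n) →ₗ[ℝ] EuclideanSpace ℝ (Fin n)) = ⊤ :=
  pl_hessian_kernels_complementary_general n f hf hpos hPL m hrank
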